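/- arXiv:1506.08458 — 4 statements merged into one kernel-verified Lean document; each statement's English description precedes it below -/
import Mathlib

section
/- Let Z = (Z_1, ..., Z_m) be binary random variables (with arbitrary joint distribution) taking values in {0,1}, with m = n + k. Let Π be a uniformly random subset of [m] of size k, independent of Z, and let Π̄ be its complement. Then for any δ ∈ (0,1) and ν > 0, Pr[ (∑_{i∈Π} Z_i ≤ kδ) ∧ (∑_{i∈Π̄} Z_i ≥ n(δ+ν)) ] ≤ exp( -2ν² n k² / ((n+k)(k+1)) ). -/
/-!
Serfling's inequality by a reverse martingale. Let `c` be a population of size `m` with values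
in `[a, b]` and mean `μ`. Deleting a uniformly random element `x` of a uniformly random
`(r + 1)`-subset `R` gives a uniformly random `r`-subset, and the deviation `μ - 𝔼 R` of the
sample mean grows by `(c x - 𝔼 R) / r`, which has mean zero and range `(b - a) / r`. Hoeffding's
lemma at each step bounds the moment generating function of `μ - 𝔼 R` for an `r`-subset by
`exp ((b - a)² t² / 8 ∑_{r ≤ i < m} 1 / i²)`, and the Chernoff bound turns this into a tail bound.
In the theorem, a small count on `Π` together with a large count on `Π̄` forces
`μ - 𝔼 Π ≥ n ν / (n + k)`, and `∑_{k ≤ i < n + k} 1 / i² ≤ n (k + 1) / ((n + k) k²)`.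
-/

open BigOperators Finset
open Real (exp exp_add exp_zero one_le_exp)

theorem Finset.sum_powersetCard_succ_sum_erase {α M : Type*} [Fintype α] [DecidableEq α]
    [AddCommMonoid M] (r : ℕ) (F : Finset α → M) :
    ∑ R ∈ powersetCard (r + 1) univ, ∑ x ∈ R, F (R.erase x)
      = (Fintype.card α - r) • ∑ R ∈ powersetCard r univ, F R := by
  have hrhs : (Fintype.card α - r) • ∑ R ∈ powersetCard r univ, F R
      = ∑ R ∈ powersetCard r univ, ∑ _x ∈ Rᶜ, F R := by
    rw [smul_sum]
    refine sum_congr rfl fun R hR => ?_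
    rw [sum_const, card_compl, (mem_powersetCard.1 hR).2]
  rw [hrhs, sum_sigma', sum_sigma']
  refine sum_nbij' (fun p => ⟨p.1.erase p.2, p.2⟩) (fun p => ⟨insert p.2 p.1, p.2⟩)
    ?_ ?_ ?_ ?_ fun _ _ => rfl
  · rintro ⟨R, x⟩ h
    simp only [mem_sigma, mem_powersetCard_univ] at h ⊢
    simp [card_erase_of_mem h.2, h.1]
  · rintro ⟨R, x⟩ h
    simp only [mem_sigma, mem_powersetCard_univ, mem_compl] at h ⊢
    simp [card_insert_of_notMem h.2, h.1]
  · rintro ⟨R, x⟩ h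
    simp only [mem_sigma] at h
    simp [insert_erase h.2]
  · rintro ⟨R, x⟩ h
    simp only [mem_sigma, mem_compl] at h
    simp [erase_insert h.2]

theorem Finset.expect_erase_of_mem {α : Type*} [DecidableEq α] {R : Finset α} {x : α} {r : ℕ}
    (hx : x ∈ R) (hR : #R = r + 1) (hr : r ≠ 0) (c : α → ℝ) :
    𝔼 i ∈ R.erase x, c i = 𝔼 i ∈ R, c i - (c x - 𝔼 i ∈ R, c i) / r := by
  have hr' : (r : ℝ) ≠ 0 := Nat.cast_ne_zero.2 hr
  rw [expect_eq_sum_div_card, expect_eq_sum_div_card, card_erase_of_mem hx, hR,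
    ← add_sum_erase R c hx]
  push_cast
  field_simp
  ring

open ProbabilityTheory MeasureTheory in
theorem sum_exp_mul_sub_expect_le {ι : Type*} (s : Finset ι) {c : ι → ℝ} {a b : ℝ}
    (hc : ∀ i ∈ s, c i ∈ Set.Icc a b) (t : ℝ) :
    ∑ i ∈ s, exp (t * (c i - 𝔼 j ∈ s, c j)) ≤ #s * exp ((b - a) ^ 2 * t ^ 2 / 8) := by
  rcases s.eq_empty_or_nonempty with rfl | hs
  · simp
  have : Nonempty s := hs.to_subtype
  let _ : MeasurableSpace s := ⊤
  set μ := (PMF.uniformOfFintype s).toMeasure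
  have hab : a ≤ b := (hc _ hs.choose_spec).1.trans (hc _ hs.choose_spec).2
  have hoeff := (hasSubgaussianMGF_of_mem_Icc (μ := μ) (X := fun i : s => c i)
    (measurable_from_top (f := fun i : s => c i)).aemeasurable
    (ae_of_all _ fun i => hc i i.2)).mgf_le t
  have hcard : (0 : ℝ) < #s := by exact_mod_cast hs.card_pos
  simp only [mgf, μ, PMF.integral_eq_sum, PMF.uniformOfFintype_apply, Fintype.card_coe,
    smul_eq_mul, ENNReal.toReal_inv, ENNReal.toReal_natCast] at hoeff
  rw [← mul_sum, ← mul_sum, sum_coe_sort s (fun i => c i),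
    sum_coe_sort s (fun i => exp (t * (c i - (#s : ℝ)⁻¹ * ∑ j ∈ s, c j)))] at hoeff
  have hnorm : ((‖b - a‖₊ / 2) ^ 2 : NNReal) * t ^ 2 / 2 = (b - a) ^ 2 * t ^ 2 / 8 := by
    push_cast [coe_nnnorm, Real.norm_of_nonneg (sub_nonneg.2 hab)]
    ring
  rw [hnorm, inv_mul_le_iff₀ hcard] at hoeff
  simpa only [expect_eq_sum_div_card, div_eq_inv_mul] using hoeff

theorem sum_Ico_one_div_sq_le {k : ℕ} (hk : k ≠ 0) (n : ℕ) :
    ∑ i ∈ Ico k (n + k), 1 / (i : ℝ) ^ 2 ≤ (n : ℝ) * (k + 1) / ((n + k) * k ^ 2) := by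
  induction n with
  | zero => simp
  | succ n ih =>
    have hk' : (0 : ℝ) < k := by positivity
    have hgap : (n + 1 : ℝ) * (k + 1) / ((n + 1 + k) * k ^ 2)
        - (n * (k + 1) / ((n + k) * k ^ 2) + 1 / (n + k : ℝ) ^ 2)
        = n / (k * (n + k) ^ 2 * (n + k + 1)) := by
      field_simp
      ring
    rw [show n + 1 + k = n + k + 1 by ring, sum_Ico_succ_top (Nat.le_add_left k n)]
    push_cast
    have : (0 : ℝ) ≤ n / (k * (n + k) ^ 2 * (n + k + 1)) := by positivity
    linarith

section Sampling

variable {α : Type*} [Fintype α] [DecidableEq α] {c : α → ℝ} {a b : ℝ}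

theorem sum_powersetCard_exp_mul_expect_sub_le (hc : ∀ i, c i ∈ Set.Icc a b) (t : ℝ) {r : ℕ}
    (hr₀ : r ≠ 0) (hr : r ≤ Fintype.card α) :
    ∑ R ∈ powersetCard r univ, exp (t * (𝔼 i, c i - 𝔼 i ∈ R, c i))
      ≤ (Fintype.card α).choose r *
          exp ((b - a) ^ 2 * t ^ 2 / 8 * ∑ i ∈ Ico r (Fintype.card α), 1 / (i : ℝ) ^ 2) := by
  set m := Fintype.card α
  induction hr using Nat.decreasingInduction with
  | self =>
    simp [m, ← card_univ]
  | of_succ r hrm ih =>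
    specialize ih (Nat.succ_ne_zero r)
    have hr : (0 : ℝ) < r := by positivity
    have hmr : (0 : ℝ) < m - r := by
      rw [sub_pos]; exact_mod_cast hrm
    set V := ∑ i ∈ Ico (r + 1) m, 1 / (i : ℝ) ^ 2
    set f := fun R : Finset α => exp (t * (𝔼 i, c i - 𝔼 i ∈ R, c i))
    have hstep : ∀ R ∈ powersetCard (r + 1) univ, ∑ x ∈ R, f (R.erase x)
        ≤ f R * ((r + 1) * exp ((b - a) ^ 2 * (t / r) ^ 2 / 8)) := by
      intro R hR
      have hcard := mem_powersetCard_univ.1 hR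
      have hsplit : ∀ x ∈ R, f (R.erase x) = f R * exp (t / r * (c x - 𝔼 i ∈ R, c i)) := by
        intro x hx
        simp only [f, expect_erase_of_mem hx hcard hr₀, ← exp_add]
        ring_nf
      rw [sum_congr rfl hsplit, ← mul_sum]
      gcongr
      simpa only [hcard, Nat.cast_succ] using sum_exp_mul_sub_expect_le R (fun i _ => hc i) (t / r)
    have hchoose : ((r : ℝ) + 1) * m.choose (r + 1) = (m - r) * m.choose r := by
      have := Nat.choose_succ_right_eq m r
      rw [← Nat.cast_sub hrm.le]
      exact_mod_cast (mul_comm _ _).trans (this.trans (mul_comm _ _))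
    have hV : ∑ i ∈ Ico r m, 1 / (i : ℝ) ^ 2 = 1 / (r : ℝ) ^ 2 + V := sum_eq_sum_Ico_succ_bot hrm _
    refine le_of_mul_le_mul_left ?_ hmr
    calc (m - r : ℝ) * ∑ R ∈ powersetCard r univ, f R
        = ∑ R ∈ powersetCard (r + 1) univ, ∑ x ∈ R, f (R.erase x) := by
          rw [sum_powersetCard_succ_sum_erase, nsmul_eq_mul, Nat.cast_sub hrm.le]
      _ ≤ ∑ R ∈ powersetCard (r + 1) univ, f R * ((r + 1) * exp ((b - a) ^ 2 * (t / r) ^ 2 / 8)) :=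
          sum_le_sum hstep
      _ ≤ m.choose (r + 1) * exp ((b - a) ^ 2 * t ^ 2 / 8 * V) *
            ((r + 1) * exp ((b - a) ^ 2 * (t / r) ^ 2 / 8)) := by
          rw [← sum_mul]; gcongr
      _ = (m - r : ℝ) *
            (m.choose r * exp ((b - a) ^ 2 * t ^ 2 / 8 * ∑ i ∈ Ico r m, 1 / (i : ℝ) ^ 2)) := by
          rw [hV, mul_add, exp_add,
            ← show (b - a) ^ 2 * (t / r) ^ 2 / 8 = (b - a) ^ 2 * t ^ 2 / 8 * (1 / r ^ 2) by ring]
          linear_combination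
            exp ((b - a) ^ 2 * t ^ 2 / 8 * V) * exp ((b - a) ^ 2 * (t / r) ^ 2 / 8) * hchoose

theorem card_filter_le_expect_sub_expect_le (hc : ∀ i, c i ∈ Set.Icc a b) {r : ℕ} (hr₀ : r ≠ 0)
    (hr : r ≤ Fintype.card α) {ε : ℝ} (hε : 0 ≤ ε) :
    (#{R ∈ powersetCard r univ | ε ≤ 𝔼 i, c i - 𝔼 i ∈ R, c i} : ℝ)
      ≤ (Fintype.card α).choose r *
          exp (-2 * ε ^ 2 / ((b - a) ^ 2 * ∑ i ∈ Ico r (Fintype.card α), 1 / (i : ℝ) ^ 2)) := by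
  set V := ∑ i ∈ Ico r (Fintype.card α), 1 / (i : ℝ) ^ 2
  set W := (b - a) ^ 2 * V
  -- the Chernoff parameter minimising `-t ε + t² W / 8`
  set t := 4 * ε / W
  have ht : 0 ≤ t := by positivity
  calc (#{R ∈ powersetCard r univ | ε ≤ 𝔼 i, c i - 𝔼 i ∈ R, c i} : ℝ)
      = ∑ R ∈ powersetCard r univ, if ε ≤ 𝔼 i, c i - 𝔼 i ∈ R, c i then 1 else 0 :=
        natCast_card_filter _ _
    _ ≤ ∑ R ∈ powersetCard r univ, exp (-(t * ε) + t * (𝔼 i, c i - 𝔼 i ∈ R, c i)) := by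
        refine sum_le_sum fun R _ => ?_
        split_ifs with h
        · exact one_le_exp (by nlinarith)
        · positivity
    _ = exp (-(t * ε)) * ∑ R ∈ powersetCard r univ, exp (t * (𝔼 i, c i - 𝔼 i ∈ R, c i)) := by
        simp only [exp_add, mul_sum]
    _ ≤ exp (-(t * ε)) * ((Fintype.card α).choose r * exp ((b - a) ^ 2 * t ^ 2 / 8 * V)) := by
        gcongr
        exact sum_powersetCard_exp_mul_expect_sub_le hc t hr₀ hr
    _ = (Fintype.card α).choose r * exp (-2 * ε ^ 2 / W) := by
        rw [mul_left_comm, ← exp_add]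
        rcases eq_or_ne W 0 with hW | hW
        · simp [t, hW]
        · congr 2
          simp only [t, W]
          field_simp
          ring

end Sampling

theorem card_filter_sum_le_and_le_sum_compl_le {α : Type*} [Fintype α] [DecidableEq α]
    {c : α → ℝ} (hc : ∀ i, c i ∈ Set.Icc 0 1) {n k : ℕ} (hα : Fintype.card α = n + k)
    {δ ν : ℝ} (hν : 0 ≤ ν) :
    (#{π ∈ powersetCard k univ | ∑ i ∈ π, c i ≤ k * δ ∧ n * (δ + ν) ≤ ∑ i ∈ πᶜ, c i} : ℝ)
      ≤ (Fintype.card α).choose k * exp (-(2 * ν ^ 2 * n * k ^ 2) / ((n + k) * (k + 1))) := by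
  by_cases hnk : n = 0 ∨ k = 0
  · have hzero : -(2 * ν ^ 2 * n * k ^ 2) / ((n + k) * (k + 1) : ℝ) = 0 := by
      rcases hnk with rfl | rfl <;> simp
    rw [hzero, exp_zero, mul_one, ← card_univ, ← card_powersetCard]
    exact_mod_cast card_filter_le _ _
  push Not at hnk
  obtain ⟨hn, hk⟩ := hnk
  set ε : ℝ := n * ν / (n + k)
  set V := ∑ i ∈ Ico k (n + k), 1 / (i : ℝ) ^ 2
  have hevent : ∀ π ∈ powersetCard k univ,
      ∑ i ∈ π, c i ≤ k * δ ∧ n * (δ + ν) ≤ ∑ i ∈ πᶜ, c i → ε ≤ 𝔼 i, c i - 𝔼 i ∈ π, c i := by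
    rintro π hπ ⟨hsmall, hlarge⟩
    rw [mem_powersetCard_univ] at hπ
    rw [Fintype.expect_eq_sum_div_card, expect_eq_sum_div_card, hα, hπ,
      ← sum_add_sum_compl π c]
    push_cast
    have hk' : (0 : ℝ) < k := by positivity
    have hgap : (∑ i ∈ π, c i + ∑ i ∈ πᶜ, c i) / (n + k) - (∑ i ∈ π, c i) / k - ε
        = (k * ∑ i ∈ πᶜ, c i - n * ∑ i ∈ π, c i - n * k * ν) / ((n + k) * k) := by
      simp only [ε]
      field_simp
      ring
    have hnum : 0 ≤ k * ∑ i ∈ πᶜ, c i - n * ∑ i ∈ π, c i - n * k * ν := by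
      nlinarith [mul_le_mul_of_nonneg_left hsmall (Nat.cast_nonneg n),
        mul_le_mul_of_nonneg_left hlarge (Nat.cast_nonneg k)]
    have := div_nonneg hnum (by positivity : (0 : ℝ) ≤ (n + k) * k)
    linarith
  have hV : 0 < V := by
    refine sum_pos (fun i hi => ?_) ⟨k, mem_Ico.2 ⟨le_rfl, by omega⟩⟩
    have : (0 : ℝ) < i := by exact_mod_cast (Nat.pos_of_ne_zero hk).trans_le (mem_Ico.1 hi).1
    positivity
  have hexponent : -2 * ε ^ 2 / V
      ≤ -(2 * ν ^ 2 * n * k ^ 2) / ((n + k) * (k + 1)) := by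
    have hB : -(2 * ν ^ 2 * n * k ^ 2) / ((n + k) * (k + 1) : ℝ)
        = -(2 * ε ^ 2 / (n * (k + 1) / ((n + k) * k ^ 2))) := by
      simp only [ε]
      field_simp
    rw [hB, neg_mul, neg_div, neg_le_neg_iff]
    exact div_le_div_of_nonneg_left (by positivity) hV (sum_Ico_one_div_sq_le hk n)
  calc (#{π ∈ powersetCard k univ | ∑ i ∈ π, c i ≤ k * δ ∧ n * (δ + ν) ≤ ∑ i ∈ πᶜ, c i} : ℝ)
      ≤ #{π ∈ powersetCard k univ | ε ≤ 𝔼 i, c i - 𝔼 i ∈ π, c i} := by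
        exact_mod_cast card_le_card (monotone_filter_right _ hevent)
    _ ≤ (Fintype.card α).choose k * exp (-2 * ε ^ 2 / V) := by
        simpa only [hα, sub_zero, one_pow, one_mul] using
          card_filter_le_expect_sub_expect_le hc hk (hα ▸ Nat.le_add_left k n) (by positivity)
    _ ≤ (Fintype.card α).choose k * exp (-(2 * ν ^ 2 * n * k ^ 2) / ((n + k) * (k + 1))) := by
        gcongr

theorem stmt0_general (m n k : ℕ) (hm : m = n + k) (δ ν : ℝ)
    (hν : 0 < ν)
    (q : (Fin m → Bool) → ℝ) (hq0 : ∀ z, 0 ≤ q z) (hq1 : ∑ z, q z = 1) :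
    ∑ z : Fin m → Bool, ∑ π ∈ Finset.powersetCard k (Finset.univ : Finset (Fin m)),
      q z * ((m.choose k : ℝ))⁻¹ *
        (if (∑ i ∈ π, (if z i then (1 : ℝ) else 0)) ≤ k * δ ∧
            (n : ℝ) * (δ + ν) ≤ ∑ i ∈ πᶜ, (if z i then (1 : ℝ) else 0) then 1 else 0)
      ≤ Real.exp (-(2 * ν ^ 2 * n * k ^ 2) / ((n + k) * (k + 1))) := by
  subst hm
  have hC : (0 : ℝ) < (n + k).choose k := by exact_mod_cast Nat.choose_pos (Nat.le_add_left k n)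
  calc _ = ∑ z : Fin (n + k) → Bool, q z * (((n + k).choose k : ℝ)⁻¹ *
          #{π ∈ powersetCard k univ | ∑ i ∈ π, (if z i then (1 : ℝ) else 0) ≤ k * δ ∧
            (n : ℝ) * (δ + ν) ≤ ∑ i ∈ πᶜ, (if z i then (1 : ℝ) else 0)}) := by
        simp only [natCast_card_filter, mul_sum, mul_assoc]
    _ ≤ ∑ z : Fin (n + k) → Bool, q z * exp (-(2 * ν ^ 2 * n * k ^ 2) / ((n + k) * (k + 1))) := by
        gcongr with z
        · exact hq0 z
        rw [inv_mul_le_iff₀ hC]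
        simpa only [Fintype.card_fin] using
          card_filter_sum_le_and_le_sum_compl_le (c := fun i => if z i then 1 else 0)
            (fun i => by split_ifs <;> simp) (Fintype.card_fin _) (δ := δ) hν.le
    _ = exp (-(2 * ν ^ 2 * n * k ^ 2) / ((n + k) * (k + 1))) := by
        rw [← sum_mul, hq1, one_mul]

/-- Serfling-type tail bound for parameter estimation.
`Z = (Z_1, ..., Z_m)` are binary random variables with arbitrary joint distribution `q`;
`Π` is a uniformly random size-`k` subset of `[m]` (weight `1 / (m choose k)`),
independent of `Z`; `Π̄ = Πᶜ` has size `n = m - k`. -/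
theorem stmt0 (m n k : ℕ) (hm : m = n + k) (δ ν : ℝ) (hδ0 : 0 < δ) (hδ1 : δ < 1)
    (hν : 0 < ν)
    (q : (Fin m → Bool) → ℝ) (hq0 : ∀ z, 0 ≤ q z) (hq1 : ∑ z, q z = 1) :
    ∑ z : Fin m → Bool, ∑ π ∈ Finset.powersetCard k (Finset.univ : Finset (Fin m)),
      q z * ((m.choose k : ℝ))⁻¹ *
        (if (∑ i ∈ π, (if z i then (1 : ℝ) else 0)) ≤ k * δ ∧
            (n : ℝ) * (δ + ν) ≤ ∑ i ∈ πᶜ, (if z i then (1 : ℝ) else 0) then 1 else 0)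
      ≤ Real.exp (-(2 * ν ^ 2 * n * k ^ 2) / ((n + k) * (k + 1))) :=
  stmt0_general m n k hm δ ν hν q hq0 hq1
end

section
/- For a population z ∈ {0,1}^m with mean μ(z) = (1/m)∑_i z_i, if S_n denotes the sum of n samples drawn uniformly without replacement from z, then Pr[(1/n) S_n ≥ μ(z) + kν/m] ≤ exp(-2ν² n k² / (m(k+1))), where k = m - n; in particular the bound is independent of μ(z). -/
/-!
Serfling's martingale argument. Writing `S_s = ∑_{i ∈ s} z i` and `μ` for the population mean,
`martingale z s = (S_s - |s| μ) / (m - |s|)` changes, when `s` is extended by an element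
`i ∉ s`, by `(z i - mean of z on sᶜ) / (m - |s| - 1)`. For `i` uniform on `sᶜ` this increment is
centred, so Hoeffding's lemma bounds its exponential moment by
`exp ((b - a)² c² / (8 (m - |s| - 1)²))`. Double counting `(j+1)`-subsets through their
`j`-subsets turns this into a recursion for the average `mgf z c j` of `exp (c * martingale z s)`
over `j`-subsets. Iterating up to `n`, bounding `∑ 1 / (m - j - 1)²` by a telescoping sum and
applying Chernoff's bound with the optimal `c` gives `exp (-2 n m t² / ((m - n + 1) (b - a)²))`;
the theorem is the case `[a, b] = [0, 1]`, `t = (m - n) ν / m`.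
-/

open Finset Real

open MeasureTheory ProbabilityTheory in
lemma sum_exp_mul_sub_average_le {ι : Type*} {a b : ℝ} (t : Finset ι) (ht : t.Nonempty)
    (f : ι → ℝ) (hf : ∀ i ∈ t, f i ∈ Set.Icc a b) (θ : ℝ) :
    ∑ i ∈ t, exp (θ * (f i - (∑ j ∈ t, f j) / #t)) ≤ #t * exp ((b - a) ^ 2 * θ ^ 2 / 8) := by
  have : Nonempty t := ht.to_subtype
  let _ : MeasurableSpace t := ⊤
  have : DiscreteMeasurableSpace t := ⟨fun _ => trivial⟩
  set μ := (PMF.uniformOfFintype t).toMeasure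
  have hμ (g : ι → ℝ) : ∫ i, g i ∂μ = (∑ i ∈ t, g i) / #t := by
    simp [μ, PMF.integral_eq_sum, PMF.uniformOfFintype_apply, div_eq_inv_mul, mul_sum,
      sum_attach t (fun i => (#t : ℝ)⁻¹ * g i)]
  have hoeffding := (hasSubgaussianMGF_of_mem_Icc (μ := μ) (X := fun i : t => f i)
    Measurable.of_discrete.aemeasurable (ae_of_all _ fun i => hf i i.2)).mgf_le θ
  rw [mgf, hμ (fun i => exp (θ * (f i - _))), hμ, div_le_iff₀ (by simpa using ht.card_pos)]
    at hoeffding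
  refine hoeffding.trans_eq ?_
  rw [mul_comm]
  congr 2
  simp only [NNReal.coe_pow, NNReal.coe_div, coe_nnnorm, Real.norm_eq_abs, div_pow, sq_abs,
    NNReal.coe_ofNat]
  ring

lemma sum_powersetCard_sum_compl_insert {ι M : Type*} [Fintype ι] [DecidableEq ι]
    [AddCommMonoid M] (j : ℕ) (f : Finset ι → M) :
    ∑ s ∈ powersetCard j univ, ∑ i ∈ sᶜ, f (insert i s) =
      (j + 1) • ∑ t ∈ powersetCard (j + 1) univ, f t := by
  calc _ = ∑ t ∈ powersetCard (j + 1) univ, ∑ _i ∈ t, f t := by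
        rw [sum_sigma', sum_sigma']
        refine sum_nbij' (fun x => ⟨insert x.2 x.1, x.2⟩) (fun x => ⟨x.1.erase x.2, x.2⟩)
          ?_ ?_ ?_ ?_ (fun _ _ => rfl)
          <;> rintro ⟨s, i⟩ h
          <;> simp_all [card_insert_of_notMem, card_erase_of_mem, insert_erase]
    _ = _ := by
        rw [smul_sum]
        refine sum_congr rfl fun t ht => ?_
        rw [sum_const, (mem_powersetCard.1 ht).2]

lemma sum_range_one_div_sub_sq_le {m : ℝ} {n : ℕ} (h : (n : ℝ) + 1 ≤ m) :
    ∑ i ∈ range n, 1 / (m - i - 1) ^ 2 ≤ (m - n + 1) * n / (m * (m - n) ^ 2) := by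
  have hk : 1 ≤ m - n := by linarith
  calc ∑ i ∈ range n, 1 / (m - i - 1) ^ 2
      ≤ ∑ i ∈ range n, (m - n + 1) / (m - n) * (1 / (m - (i + 1 : ℕ)) - 1 / (m - i)) := by
        refine sum_le_sum fun i hi => ?_
        have hi : (i : ℝ) + 1 ≤ n := by exact_mod_cast mem_range.1 hi
        have h1 : 0 < m - i - 1 := by linarith
        have h2 : 0 < m - i := by linarith
        rw [Nat.cast_succ, ← sub_sub, div_sub_div _ _ h1.ne' h2.ne', div_mul_div_comm,
          div_le_div_iff₀ (by positivity) (by positivity)]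
        nlinarith
    _ = (m - n + 1) / (m - n) * (1 / (m - n) - 1 / m) := by
        rw [← mul_sum, sum_range_sub (fun i => 1 / (m - i))]
        simp
    _ = (m - n + 1) * n / (m * (m - n) ^ 2) := by
        have : m - n ≠ 0 := by linarith
        have : m ≠ 0 := by linarith [(n.cast_nonneg : (0 : ℝ) ≤ n)]
        field_simp
        ring

lemma sum_inv_choose_mul_ite_le_one {ι : Type*} [Fintype ι] {n : ℕ} (hn : n ≤ Fintype.card ι)
    (p : Finset ι → Prop) [DecidablePred p] :
    ∑ s ∈ powersetCard n univ, ((Fintype.card ι).choose n : ℝ)⁻¹ * (if p s then 1 else 0) ≤ 1 := by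
  have hpos : (0 : ℝ) < (Fintype.card ι).choose n := by exact_mod_cast Nat.choose_pos hn
  calc _ ≤ ∑ s ∈ powersetCard n (univ : Finset ι), ((Fintype.card ι).choose n : ℝ)⁻¹ := by
        gcongr with s
        split_ifs <;> simp [hpos.le]
    _ = 1 := by simp [card_powersetCard, hpos.ne']

namespace Serfling

variable {ι : Type*} [Fintype ι] (z : ι → ℝ)

noncomputable def martingale (s : Finset ι) : ℝ :=
  (∑ i ∈ s, z i - #s * (∑ i, z i) / Fintype.card ι) / (Fintype.card ι - #s)

noncomputable def mgf (c : ℝ) (j : ℕ) : ℝ :=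
  ((Fintype.card ι).choose j : ℝ)⁻¹ * ∑ s ∈ powersetCard j univ, exp (c * martingale z s)

lemma martingale_insert [DecidableEq ι] {s : Finset ι} {i : ι} (hi : i ∉ s)
    (hs : #s + 1 < Fintype.card ι) :
    martingale z (insert i s) =
      martingale z s + (z i - (∑ j ∈ sᶜ, z j) / #sᶜ) / (#sᶜ - 1) := by
  have hcompl : ((#sᶜ : ℕ) : ℝ) = Fintype.card ι - #s := by
    rw [card_compl, Nat.cast_sub (by omega)]
  have hm : (#s : ℝ) + 1 < Fintype.card ι := by exact_mod_cast hs
  have hsum : ∑ j ∈ sᶜ, z j = ∑ j, z j - ∑ j ∈ s, z j := by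
    rw [← sum_compl_add_sum s]; ring
  rw [martingale, martingale, sum_insert hi, card_insert_of_notMem hi, hsum, hcompl,
    Nat.cast_succ, ← sub_sub]
  have : (Fintype.card ι : ℝ) - #s - 1 ≠ 0 := by linarith
  have : (Fintype.card ι : ℝ) - #s ≠ 0 := by linarith
  have : (Fintype.card ι : ℝ) ≠ 0 := by linarith
  field_simp
  ring

variable {z} {a b : ℝ}

lemma sum_compl_exp_martingale_insert_le [DecidableEq ι] (hz : ∀ i, z i ∈ Set.Icc a b) (c : ℝ)
    {s : Finset ι} (hs : #s + 1 < Fintype.card ι) :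
    ∑ i ∈ sᶜ, exp (c * martingale z (insert i s)) ≤
      #sᶜ * exp (c * martingale z s) * exp ((b - a) ^ 2 * (c / (#sᶜ - 1)) ^ 2 / 8) := by
  have hne : sᶜ.Nonempty := by
    rw [← card_pos, card_compl]; omega
  calc ∑ i ∈ sᶜ, exp (c * martingale z (insert i s))
      = exp (c * martingale z s) *
          ∑ i ∈ sᶜ, exp (c / (#sᶜ - 1) * (z i - (∑ j ∈ sᶜ, z j) / #sᶜ)) := by
        rw [mul_sum]
        refine sum_congr rfl fun i hi => ?_
        rw [martingale_insert z (mem_compl.1 hi) hs, ← exp_add]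
        ring_nf
    _ ≤ exp (c * martingale z s) * (#sᶜ * exp ((b - a) ^ 2 * (c / (#sᶜ - 1)) ^ 2 / 8)) := by
        gcongr
        exact sum_exp_mul_sub_average_le sᶜ hne z (fun i _ => hz i) _
    _ = _ := by ring

lemma mgf_succ_le (hz : ∀ i, z i ∈ Set.Icc a b) (c : ℝ) {j : ℕ}
    (hj : j + 1 < Fintype.card ι) :
    mgf z c (j + 1) ≤
      mgf z c j * exp ((b - a) ^ 2 * (c / (Fintype.card ι - j - 1)) ^ 2 / 8) := by
  classical
  set m := Fintype.card ι with hm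
  have hcompl : ∀ s ∈ powersetCard j (univ : Finset ι), ((#sᶜ : ℕ) : ℝ) = m - j := by
    intro s hs
    rw [card_compl, (mem_powersetCard.1 hs).2, Nat.cast_sub (by omega)]
  have hchoose : (m.choose (j + 1) : ℝ) * (j + 1) = m.choose j * (m - j) := by
    rw [← Nat.cast_sub (by omega), ← Nat.cast_add_one, ← Nat.cast_mul, ← Nat.cast_mul,
      Nat.choose_succ_right_eq]
  have hpos : (0 : ℝ) < m.choose (j + 1) := by exact_mod_cast Nat.choose_pos (by omega)
  have hpos' : (0 : ℝ) < m.choose j := by exact_mod_cast Nat.choose_pos (by omega)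
  calc mgf z c (j + 1)
      = (m.choose (j + 1) : ℝ)⁻¹ * (j + 1 : ℝ)⁻¹ *
          ∑ s ∈ powersetCard j univ, ∑ i ∈ sᶜ, exp (c * martingale z (insert i s)) := by
        rw [sum_powersetCard_sum_compl_insert j (fun t => exp (c * martingale z t)),
          nsmul_eq_mul, mgf, ← hm]
        field_simp
        push_cast
        ring
    _ ≤ (m.choose (j + 1) : ℝ)⁻¹ * (j + 1 : ℝ)⁻¹ *
          ∑ s ∈ powersetCard j univ,
            (m - j) * exp (c * martingale z s) * exp ((b - a) ^ 2 * (c / (m - j - 1)) ^ 2 / 8) := by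
        gcongr with s hs
        have := sum_compl_exp_martingale_insert_le hz c
          (s := s) (by rw [(mem_powersetCard.1 hs).2]; omega)
        rwa [hcompl s hs] at this
    _ = mgf z c j * exp ((b - a) ^ 2 * (c / (m - j - 1)) ^ 2 / 8) := by
        rw [mgf, ← hm, ← sum_mul, ← mul_sum]
        field_simp
        rw [hchoose]
        ring

lemma mgf_zero (c : ℝ) : mgf z c 0 = 1 := by
  simp [mgf, martingale]

lemma mgf_le_exp_sum (hz : ∀ i, z i ∈ Set.Icc a b) (c : ℝ) {n : ℕ} (hn : n < Fintype.card ι) :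
    mgf z c n ≤
      exp ((b - a) ^ 2 * c ^ 2 / 8 * ∑ i ∈ range n, 1 / ((Fintype.card ι : ℝ) - i - 1) ^ 2) := by
  induction n with
  | zero => simp [mgf_zero]
  | succ n ih =>
    have hm : (n : ℝ) + 1 < Fintype.card ι := by exact_mod_cast hn
    calc mgf z c (n + 1)
        ≤ mgf z c n * exp ((b - a) ^ 2 * (c / (Fintype.card ι - n - 1)) ^ 2 / 8) :=
          mgf_succ_le hz c hn
      _ ≤ exp ((b - a) ^ 2 * c ^ 2 / 8 *
              ∑ i ∈ range n, 1 / ((Fintype.card ι : ℝ) - i - 1) ^ 2) *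
            exp ((b - a) ^ 2 * (c / (Fintype.card ι - n - 1)) ^ 2 / 8) := by
          gcongr
          exact ih (by omega)
      _ = _ := by
          rw [← exp_add, sum_range_succ]
          congr 1
          have : (Fintype.card ι : ℝ) - n - 1 ≠ 0 := by linarith
          field_simp

lemma tail_le_exp_mul_mgf {n : ℕ} (hn : 0 < n) (hnm : n < Fintype.card ι) {c : ℝ} (hc : 0 ≤ c)
    (t : ℝ) :
    ∑ s ∈ powersetCard n univ, ((Fintype.card ι).choose n : ℝ)⁻¹ *
        (if (∑ i, z i) / Fintype.card ι + t ≤ (∑ i ∈ s, z i) / n then 1 else 0) ≤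
      exp (-(c * n * t / (Fintype.card ι - n))) * mgf z c n := by
  rw [mgf, mul_left_comm, mul_sum, mul_sum]
  gcongr with s hs
  have hk : (0 : ℝ) < Fintype.card ι - n := by
    rw [sub_pos]; exact_mod_cast hnm
  rw [← exp_add]
  split_ifs with hevent
  · refine one_le_exp ?_
    rw [martingale, (mem_powersetCard.1 hs).2]
    have hdev : n * t ≤ ∑ i ∈ s, z i - n * (∑ i, z i) / Fintype.card ι := by
      have := (le_div_iff₀ (by positivity)).1 hevent
      linarith [show ((∑ i, z i) / Fintype.card ι + t) * n =
        n * (∑ i, z i) / Fintype.card ι + n * t by ring]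
    rw [show ∀ x : ℝ, -(c * n * t / (Fintype.card ι - n)) + c * (x / (Fintype.card ι - n)) =
      c / (Fintype.card ι - n) * (x - n * t) from fun x => by ring]
    exact mul_nonneg (div_nonneg hc hk.le) (sub_nonneg.2 hdev)
  · positivity

theorem tail_le (hz : ∀ i, z i ∈ Set.Icc a b) (hab : a < b) {n : ℕ} (hn : 0 < n)
    (hnm : n < Fintype.card ι) {t : ℝ} (ht : 0 ≤ t) :
    ∑ s ∈ powersetCard n univ, ((Fintype.card ι).choose n : ℝ)⁻¹ *
        (if (∑ i, z i) / Fintype.card ι + t ≤ (∑ i ∈ s, z i) / n then 1 else 0) ≤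
      exp (-(2 * n * Fintype.card ι * t ^ 2) / ((Fintype.card ι - n + 1) * (b - a) ^ 2)) := by
  have hm : (n : ℝ) + 1 ≤ Fintype.card ι := by exact_mod_cast hnm
  set m : ℝ := (Fintype.card ι : ℝ)
  have hk : (0 : ℝ) < m - n := by linarith
  have hba : 0 < b - a := by linarith
  -- the minimiser of the quadratic exponent in `c` below
  set c := 4 * m * (m - n) * t / ((m - n + 1) * (b - a) ^ 2) with hc_def
  have hc : 0 ≤ c := by positivity
  calc _ ≤ exp (-(c * n * t / (m - n))) * mgf z c n := tail_le_exp_mul_mgf hn hnm hc t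
    _ ≤ exp (-(c * n * t / (m - n))) *
          exp ((b - a) ^ 2 * c ^ 2 / 8 * ∑ i ∈ range n, 1 / (m - i - 1) ^ 2) := by
        gcongr
        exact mgf_le_exp_sum hz c hnm
    _ ≤ exp (-(c * n * t / (m - n))) *
          exp ((b - a) ^ 2 * c ^ 2 / 8 * ((m - n + 1) * n / (m * (m - n) ^ 2))) := by
        gcongr
        exact sum_range_one_div_sub_sq_le hm
    _ = _ := by
        rw [← exp_add, hc_def]
        congr 1
        have : m ≠ 0 := by linarith
        field_simp
        ring

end Serfling

/-- Serfling's bound. For a population `z ∈ {0,1}^m` with mean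
`μ(z) = (1/m) ∑ᵢ zᵢ`, sampling `n` entries uniformly without replacement (equivalently,
a uniform size-`n` subset `s`), the probability that the sample mean exceeds `μ(z) + kν/m`
is at most `exp(-2ν²nk²/(m(k+1)))`, where `k = m - n`; the bound is independent of `μ(z)`. -/
theorem stmt2 (m n : ℕ) (hn : 0 < n) (hnm : n ≤ m)
    (z : Fin m → ℝ) (hz : ∀ i, z i = 0 ∨ z i = 1) (ν : ℝ) (hν : 0 < ν) :
    ∑ s ∈ Finset.powersetCard n (Finset.univ : Finset (Fin m)),
      ((m.choose n : ℝ))⁻¹ *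
        (if (∑ i, z i) / m + ((m - n : ℕ) : ℝ) * ν / m ≤ (∑ i ∈ s, z i) / n then 1 else 0)
      ≤ Real.exp (-(2 * ν ^ 2 * n * ((m - n : ℕ) : ℝ) ^ 2) / (m * (((m - n : ℕ) : ℝ) + 1))) := by
  rcases hnm.lt_or_eq with hlt | rfl
  · have hz' : ∀ i, z i ∈ Set.Icc (0 : ℝ) 1 := fun i => by rcases hz i with h | h <;> simp [h]
    have := Serfling.tail_le hz' zero_lt_one hn (by simpa using hlt)
      (t := ((m - n : ℕ) : ℝ) * ν / m) (by positivity)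
    simp only [Fintype.card_fin] at this
    refine this.trans_eq ?_
    congr 1
    rw [Nat.cast_sub hlt.le]
    field_simp
    ring
  · simpa using sum_inv_choose_mul_ite_le_one (ι := Fin n) le_rfl _
end

section
/- Removing an unlikely event by smoothing: Let ρ_{AX} be a subnormalized cq-state (positive semidefinite with trace t := tr ρ_{AX} ≤ 1, classical on X), and let Ω ⊆ X be an event with probability ε := Pr[Ω]_ρ = tr(ρ_{AX ∧ Ω}) < t. Then there exists a subnormalized state ρ̃_{AX} with Pr[Ω]_{ρ̃} = 0 and purified distance P(ρ_{AX}, ρ̃_{AX}) ≤ √ε. Explicitly, ρ̃_{AX} = c·ρ_{AX ∧ ¬Ω} with c = 1/(1−ε) achieves generalized fidelity F(ρ, ρ̃) = 1 − ε. -/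
open Matrix BigOperators Finset
open scoped ComplexOrder

noncomputable section

/-- The square root of a positive semidefinite matrix, as defined in the older Mathlib
(`Matrix.PosSemidef.sqrt`, since removed). -/
def Matrix.PosSemidef.sqrt {n 𝕜 : Type*} [Fintype n] [DecidableEq n] [RCLike 𝕜]
    {A : Matrix n n 𝕜} (hA : A.PosSemidef) : Matrix n n 𝕜 :=
  hA.1.eigenvectorUnitary.1 * diagonal ((↑) ∘ (Real.sqrt) ∘ hA.1.eigenvalues) *
  (star hA.1.eigenvectorUnitary : Matrix n n 𝕜)

/-- Trace norm (Schatten 1-norm) of a complex matrix: `tr √(AᴴA)`. -/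
def trNorm {n : Type*} [Fintype n] [DecidableEq n] (A : Matrix n n ℂ) : ℝ :=
  ((Matrix.posSemidef_conjTranspose_mul_self A).sqrt.trace).re

/-- Positive-semidefinite square root, extended by `0` to non-PSD matrices. -/
def psdSqrt {n : Type*} [Fintype n] [DecidableEq n] (A : Matrix n n ℂ) : Matrix n n ℂ :=
  open scoped Classical in
  if h : A.PosSemidef then h.sqrt else 0

/-- Generalized fidelity for subnormalized states:
`F(ρ,σ) = (tr √(√ρ σ √ρ) + √(1−tr ρ)√(1−tr σ))²`. -/
def genFid {n : Type*} [Fintype n] [DecidableEq n] (ρ σ : Matrix n n ℂ) : ℝ :=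
  ((psdSqrt (psdSqrt ρ * σ * psdSqrt ρ)).trace.re
    + Real.sqrt (1 - ρ.trace.re) * Real.sqrt (1 - σ.trace.re)) ^ 2

/-- Purified distance `P(ρ,σ) = √(1 − F(ρ,σ))`. -/
def purifiedDist {n : Type*} [Fintype n] [DecidableEq n] (ρ σ : Matrix n n ℂ) : ℝ :=
  Real.sqrt (1 - genFid ρ σ)

section SqrtCompat
open scoped MatrixOrder
variable {n : Type*} [Fintype n] [DecidableEq n]

lemma Matrix.PosSemidef.sqrt_eq_cfcSqrt {A : Matrix n n ℂ} (hA : A.PosSemidef) :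
    hA.sqrt = CFC.sqrt A := by
  rw [CFC.sqrt_eq_cfc, cfc_nnreal_eq_real _ A, hA.1.cfc_eq]
  simp only [IsHermitian.cfc, Unitary.conjStarAlgAut_apply, Matrix.PosSemidef.sqrt]
  rw [show (fun x : ℝ => ((NNReal.sqrt x.toNNReal : NNReal) : ℝ)) = Real.sqrt from
    funext fun x => (Real.sqrt.eq_1 x).symm]

lemma Matrix.PosSemidef.sqrt_mul_self {A : Matrix n n ℂ} (hA : A.PosSemidef) :
    hA.sqrt * hA.sqrt = A := by
  rw [hA.sqrt_eq_cfcSqrt]; exact CFC.sqrt_mul_sqrt_self A hA.nonneg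

lemma Matrix.PosSemidef.posSemidef_sqrt {A : Matrix n n ℂ} (hA : A.PosSemidef) :
    hA.sqrt.PosSemidef := by
  rw [hA.sqrt_eq_cfcSqrt]; exact (CFC.sqrt_nonneg A).posSemidef

lemma Matrix.PosSemidef.eq_sqrt_of_sq_eq {A B : Matrix n n ℂ} (hB : B.PosSemidef)
    (hA : A.PosSemidef) (hAB : B ^ 2 = A) : B = hA.sqrt := by
  rw [hA.sqrt_eq_cfcSqrt]; subst hAB; exact (CFC.sqrt_sq B hB.nonneg).symm

end SqrtCompat

section AuxSmooth

variable {n X : Type*} [Fintype n] [DecidableEq n] [Fintype X] [DecidableEq X]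

lemma psd_blockDiagonal (f : X → Matrix n n ℂ) (hf : ∀ x, (f x).PosSemidef) :
    (Matrix.blockDiagonal f).PosSemidef := by
  refine Matrix.PosSemidef.of_dotProduct_mulVec_nonneg ?_ ?_
  · rw [Matrix.IsHermitian, Matrix.blockDiagonal_conjTranspose]
    exact congrArg _ (funext fun x => (hf x).1)
  · intro v
    have key : ∀ p : n × X, (Matrix.blockDiagonal f *ᵥ v) p
        = (f p.2 *ᵥ fun i => v (i, p.2)) p.1 := by
      intro p
      simp [Matrix.mulVec, dotProduct, Matrix.blockDiagonal_apply, Fintype.sum_prod_type,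
        Finset.sum_ite_eq]
    have : dotProduct (star v) (Matrix.blockDiagonal f *ᵥ v)
        = ∑ x : X, dotProduct (star fun i => v (i, x)) (f x *ᵥ fun i => v (i, x)) := by
      simp only [dotProduct, Pi.star_apply, key]
      rw [Fintype.sum_prod_type, Finset.sum_comm]
    rw [this]
    exact Finset.sum_nonneg fun x _ => (hf x).dotProduct_mulVec_nonneg _

omit [DecidableEq n] in
lemma psd_smul {A : Matrix n n ℂ} (hA : A.PosSemidef) {c : ℝ} (hc : 0 ≤ c) :
    (c • A).PosSemidef := by
  refine Matrix.PosSemidef.of_dotProduct_mulVec_nonneg ?_ ?_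
  · rw [Matrix.IsHermitian, Matrix.conjTranspose_smul, star_trivial, hA.1]
  · intro v
    rw [Matrix.smul_mulVec, dotProduct_smul]
    have h0 : (0:ℂ) ≤ (c:ℂ) := by exact_mod_cast Complex.zero_le_real.mpr hc
    rw [Complex.real_smul]
    exact mul_nonneg h0 (hA.dotProduct_mulVec_nonneg v)

lemma trace_re_nonneg {A : Matrix n n ℂ} (hA : A.PosSemidef) : 0 ≤ A.trace.re := by
  rw [Matrix.trace, Complex.re_sum]
  refine Finset.sum_nonneg fun i _ => ?_
  have := hA.re_dotProduct_nonneg (Pi.single i 1)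
  simpa [dotProduct, Matrix.mulVec, Pi.single_apply, Finset.sum_ite_eq] using this

lemma sqrt_mul_mul_sqrt {A : Matrix n n ℂ} (hA : A.PosSemidef) :
    hA.sqrt * A * hA.sqrt = A ^ 2 := by
  have h := hA.sqrt_mul_self
  calc hA.sqrt * A * hA.sqrt = hA.sqrt * (hA.sqrt * hA.sqrt) * hA.sqrt := by rw [h]
  _ = (hA.sqrt * hA.sqrt) * (hA.sqrt * hA.sqrt) := by simp only [mul_assoc]
  _ = A ^ 2 := by rw [h, pow_two]

lemma trace_re_blockDiagonal (f : X → Matrix n n ℂ) :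
    (Matrix.blockDiagonal f).trace.re = ∑ x, (f x).trace.re := by
  rw [Matrix.trace_blockDiagonal, Complex.re_sum]

end AuxSmooth

/-- Removing an unlikely event by smoothing. Let `ρ_{AX}` be a subnormalized
cq-state (blocks `f x`, total trace `t ≤ 1`, classical on `X`), and `Ω` an event with
probability `ε = Pr[Ω]_ρ < t`. Then there is a subnormalized cq-state `ρ̃_{AX}` (blocks `g x`)
with `Pr[Ω]_{ρ̃} = 0` and purified distance `P(ρ, ρ̃) ≤ √ε`; explicitly
`ρ̃ = (1−ε)⁻¹ • ρ_{AX ∧ ¬Ω}` achieves generalized fidelity `F(ρ, ρ̃) = 1 − ε`. -/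
theorem stmt8 (d : ℕ) (X : Type) [Fintype X] [DecidableEq X]
    (f : X → Matrix (Fin d) (Fin d) ℂ) (hf : ∀ x, (f x).PosSemidef)
    (ht : ∑ x, (f x).trace.re ≤ 1)
    (Ω : X → Prop) [DecidablePred Ω]
    (hεt : ∑ x ∈ Finset.univ.filter Ω, (f x).trace.re < ∑ x, (f x).trace.re) :
    ∃ g : X → Matrix (Fin d) (Fin d) ℂ,
      (∀ x, (g x).PosSemidef) ∧
      (Matrix.blockDiagonal g).trace.re ≤ 1 ∧
      (∑ x ∈ Finset.univ.filter Ω, (g x).trace.re = 0) ∧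
      purifiedDist (Matrix.blockDiagonal f) (Matrix.blockDiagonal g)
        ≤ Real.sqrt (∑ x ∈ Finset.univ.filter Ω, (f x).trace.re) ∧
      g = (fun x =>
        ((1 - ∑ x ∈ Finset.univ.filter Ω, (f x).trace.re : ℝ))⁻¹ •
          (if Ω x then 0 else f x)) ∧
      genFid (Matrix.blockDiagonal f) (Matrix.blockDiagonal g)
        = 1 - ∑ x ∈ Finset.univ.filter Ω, (f x).trace.re := by
  set ε : ℝ := ∑ x ∈ Finset.univ.filter Ω, (f x).trace.re with hεdef
  set t : ℝ := ∑ x, (f x).trace.re with htdef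
  have hε0 : 0 ≤ ε := Finset.sum_nonneg fun x _ => trace_re_nonneg (hf x)
  have hε1 : ε < 1 := lt_of_lt_of_le hεt ht
  have ha : 0 < 1 - ε := by linarith
  have htε : 0 < t - ε := by linarith
  have h1t : 0 ≤ 1 - t := by linarith
  set c : ℝ := (1 - ε)⁻¹ with hcdef
  have hc0 : 0 ≤ c := le_of_lt (inv_pos.mpr ha)
  set g : X → Matrix (Fin d) (Fin d) ℂ :=
    fun x => c • (if Ω x then 0 else f x) with hgdef
  set g' : X → Matrix (Fin d) (Fin d) ℂ := fun x => if Ω x then 0 else f x with hg'def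
  have hg' : ∀ x, (g' x).PosSemidef := by
    intro x; by_cases h : Ω x <;> simp [hg'def, h, Matrix.PosSemidef.zero, hf x]
  have hgpsd : ∀ x, (g x).PosSemidef := fun x => psd_smul (hg' x) hc0
  -- trace computations
  have htr_g' : ∑ x, (g' x).trace.re = t - ε := by
    have h1 : ∑ x : X, (if Ω x then (f x).trace.re else 0) = ε := (Finset.sum_filter _ _).symm
    have h2 : ∀ x : X, (g' x).trace.re
        = (f x).trace.re - (if Ω x then (f x).trace.re else 0) := by
      intro x; by_cases h : Ω x <;> simp [hg'def, h]
    rw [Finset.sum_congr rfl fun x _ => h2 x, Finset.sum_sub_distrib, h1, htdef]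
  have htr_g : ∑ x, (g x).trace.re = c * (t - ε) := by
    have : ∀ x : X, (g x).trace.re = c * (g' x).trace.re := by
      intro x; by_cases h : Ω x <;>
        simp [hgdef, hg'def, h, Matrix.trace_smul, Complex.smul_re]
    rw [Finset.sum_congr rfl fun x _ => this x, ← Finset.mul_sum, htr_g']
  have htrbd_g : (Matrix.blockDiagonal g).trace.re = c * (t - ε) := by
    rw [trace_re_blockDiagonal, htr_g]
  have htrbd_f : (Matrix.blockDiagonal f).trace.re = t := by
    rw [trace_re_blockDiagonal, htdef]
  -- the generalized fidelity
  have hρ : (Matrix.blockDiagonal f).PosSemidef := psd_blockDiagonal f hf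
  have hsqrtρ : psdSqrt (Matrix.blockDiagonal f)
      = Matrix.blockDiagonal (fun x => (hf x).sqrt) := by
    rw [psdSqrt, dif_pos hρ]
    refine ((psd_blockDiagonal _ fun x => (hf x).posSemidef_sqrt).eq_sqrt_of_sq_eq hρ ?_).symm
    rw [pow_two, ← Matrix.blockDiagonal_mul]
    exact congrArg _ (funext fun x => (hf x).sqrt_mul_self)
  have hσ : Matrix.blockDiagonal g = c • Matrix.blockDiagonal g' := by
    rw [← Matrix.blockDiagonal_smul]; rfl
  have hprod : psdSqrt (Matrix.blockDiagonal f) * Matrix.blockDiagonal g *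
        psdSqrt (Matrix.blockDiagonal f)
      = c • Matrix.blockDiagonal (fun x => if Ω x then 0 else (f x) ^ 2) := by
    rw [hsqrtρ, hσ, Matrix.mul_smul, Matrix.smul_mul, ← Matrix.blockDiagonal_mul,
      ← Matrix.blockDiagonal_mul]
    refine congrArg _ (congrArg Matrix.blockDiagonal (funext fun x => ?_))
    by_cases h : Ω x
    · simp [hg'def, h]
    · simp only [hg'def, if_neg h]
      exact sqrt_mul_mul_sqrt (hf x)
  have hh2psd : (Matrix.blockDiagonal (fun x => if Ω x then 0 else (f x) ^ 2)).PosSemidef := by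
    refine psd_blockDiagonal _ fun x => ?_
    by_cases h : Ω x
    · simp [h, Matrix.PosSemidef.zero]
    · simp only [if_neg h]; exact (hf x).pow 2
  have hM : (c • Matrix.blockDiagonal (fun x => if Ω x then 0 else (f x) ^ 2)).PosSemidef :=
    psd_smul hh2psd hc0
  have hBpsd : (Real.sqrt c • Matrix.blockDiagonal g').PosSemidef :=
    psd_smul (psd_blockDiagonal g' hg') (Real.sqrt_nonneg c)
  have hB2 : (Real.sqrt c • Matrix.blockDiagonal g') ^ 2
      = c • Matrix.blockDiagonal (fun x => if Ω x then 0 else (f x) ^ 2) := by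
    rw [pow_two, smul_mul_smul_comm, Real.mul_self_sqrt hc0, ← Matrix.blockDiagonal_mul]
    refine congrArg _ (congrArg Matrix.blockDiagonal (funext fun x => ?_))
    by_cases h : Ω x <;> simp [hg'def, h, pow_two]
  have hsqrtM : psdSqrt (c • Matrix.blockDiagonal (fun x => if Ω x then 0 else (f x) ^ 2))
      = Real.sqrt c • Matrix.blockDiagonal g' := by
    rw [psdSqrt, dif_pos hM]
    exact (hBpsd.eq_sqrt_of_sq_eq hM hB2).symm
  have htrM : (psdSqrt (psdSqrt (Matrix.blockDiagonal f) * Matrix.blockDiagonal g *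
        psdSqrt (Matrix.blockDiagonal f))).trace.re = Real.sqrt c * (t - ε) := by
    rw [hprod, hsqrtM, Matrix.trace_smul, Complex.smul_re, trace_re_blockDiagonal, htr_g',
      smul_eq_mul]
  -- real arithmetic
  have hkey : Real.sqrt c * (t - ε) + Real.sqrt (1 - t) * Real.sqrt (1 - c * (t - ε))
      = Real.sqrt (1 - ε) := by
    have h1 : 1 - c * (t - ε) = (1 - t) / (1 - ε) := by
      rw [hcdef]; field_simp; ring
    have hsa : 0 < Real.sqrt (1 - ε) := Real.sqrt_pos.mpr ha
    have hm1 : Real.sqrt (1 - t) * Real.sqrt (1 - t) = 1 - t := Real.mul_self_sqrt h1t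
    have hm2 : Real.sqrt (1 - ε) * Real.sqrt (1 - ε) = 1 - ε := Real.mul_self_sqrt ha.le
    rw [h1, Real.sqrt_div h1t, hcdef, Real.sqrt_inv]
    field_simp
    rw [Real.sq_sqrt h1t, Real.sq_sqrt ha.le]; ring
  have hfid : genFid (Matrix.blockDiagonal f) (Matrix.blockDiagonal g) = 1 - ε := by
    rw [genFid, htrM, htrbd_f, htrbd_g, hkey, Real.sq_sqrt ha.le]
  refine ⟨g, hgpsd, ?_, ?_, ?_, rfl, hfid⟩
  · rw [htrbd_g, hcdef]
    have h2 : t - ε ≤ 1 - ε := by linarith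
    calc (1 - ε)⁻¹ * (t - ε) ≤ (1 - ε)⁻¹ * (1 - ε) :=
          mul_le_mul_of_nonneg_left h2 hc0
    _ = 1 := inv_mul_cancel₀ ha.ne'
  · refine Finset.sum_eq_zero fun x hx => ?_
    have := (Finset.mem_filter.mp hx).2
    simp [hgdef, this]
  · rw [purifiedDist, hfid]
    apply le_of_eq
    congr 1
    ring

end
end

section
/- Classical universal-hash second-moment identity: Let σ_{XD} = ∑_x σ_{D∧X=x} be a cq-state classical on X and ℋ universal₂ from {0,1}^n to {0,1}^ℓ. For any positive operator τ_D, (1/|ℋ|)∑_{h∈ℋ} tr{(id_K ⊗ τ_D^{−1}) ω²_{KD|S^H=h}} = (1 − 2^{−ℓ})·tr{(id_X ⊗ τ_D^{−1}) σ²_{XD}} + 2^{−ℓ}·tr{τ_D^{−1} σ_D²}, where ω_{KD|S^H=h} = ∑_k |k⟩⟨k| ⊗ ∑_{x: h(x)=k} σ_{D∧X=x}. (Here the universal₂ family is assumed perfectly universal: Pr_H[H(x)=H(y)] = 2^{−ℓ} exactly for x ≠ y.) -/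
/-!
Expanding the square of each block `∑_{h(x)=k} σ_x` and summing over `k` leaves
`∑_{x,y : h x = h y} tr(τ⁻¹ σ_x σ_y)`. Averaging over `h`, the pair `(x, y)` is counted with
weight `1` on the diagonal and with the collision probability `2^{-ℓ}` off it, which splits into
`(1 - 2^{-ℓ})` times the diagonal sum plus `2^{-ℓ}` times the full double sum.
-/

open Matrix Kronecker BigOperators Finset
open scoped ComplexOrder

noncomputable section

/-- Classical-quantum state assembled from blocks indexed by the classical register. -/
def cqState {C D : Type*} [DecidableEq C] (f : C → Matrix D D ℂ) :
    Matrix (C × D) (C × D) ℂ :=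
  Matrix.of fun p q => if p.1 = q.1 then f p.1 p.2 q.2 else 0

lemma cqState_mul {C D : Type*} [DecidableEq C] [Fintype C] [Fintype D]
    (g g' : C → Matrix D D ℂ) :
    cqState g * cqState g' = cqState (fun k => g k * g' k) := by
  ext ⟨a, i⟩ ⟨b, j⟩
  by_cases hab : a = b
  · subst hab
    simp [cqState, Matrix.mul_apply, Fintype.sum_prod_type]
  · simp [cqState, Matrix.mul_apply, Fintype.sum_prod_type, hab]

lemma trace_one_kronecker_mul_cqState {C D : Type*} [DecidableEq C] [Fintype C] [Fintype D]
    [DecidableEq D] (A : Matrix D D ℂ) (m : C → Matrix D D ℂ) :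
    ((1 ⊗ₖ A) * cqState m).trace = (A * ∑ k, m k).trace := by
  simp [Matrix.trace, Matrix.mul_apply, Matrix.diag, cqState, Fintype.sum_prod_type,
    Matrix.one_apply, Matrix.sum_apply, Finset.mul_sum, Finset.sum_comm (γ := C)]

lemma sum_fiberwise_mul_self {R X K : Type*} [NonUnitalNonAssocSemiring R] [Fintype X]
    [Fintype K] [DecidableEq K] (φ : X → K) (f : X → R) :
    ∑ k, (∑ x ∈ univ.filter (fun x => φ x = k), f x) *
        (∑ x ∈ univ.filter (fun x => φ x = k), f x)
      = ∑ x, ∑ y ∈ univ.filter (fun y => φ y = φ x), f x * f y := by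
  rw [← Finset.sum_fiberwise univ φ]
  refine Finset.sum_congr rfl fun k _ => ?_
  rw [Finset.sum_mul]
  refine Finset.sum_congr rfl fun x hx => ?_
  rw [(Finset.mem_filter.mp hx).2, Finset.mul_sum]

section Universal

variable {H X K : Type*} [Fintype H] [Nonempty H] [DecidableEq X] [DecidableEq K]
  (app : H → X → K) (c : ℝ)
  (huniv : ∀ x y, x ≠ y →
    ((univ.filter fun h => app h x = app h y).card : ℝ) / Fintype.card H = c)
include huniv

lemma inv_card_mul_card_collisions (x y : X) :
    (Fintype.card H : ℂ)⁻¹ * ((univ.filter fun h => app h x = app h y).card : ℂ)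
      = if x = y then 1 else (c : ℂ) := by
  split_ifs with hxy
  · subst hxy
    simp [Finset.filter_true_of_mem]
  · rw [inv_mul_eq_div]
    exact_mod_cast huniv x y hxy

lemma average_sum_collisions [Fintype X] (g : X → X → ℂ) :
    (Fintype.card H : ℂ)⁻¹ *
        ∑ h, ∑ x, ∑ y ∈ univ.filter (fun y => app h y = app h x), g x y
      = (1 - c) * ∑ x, g x x + c * ∑ x, ∑ y, g x y := by
  have hcount : ∀ x, ∑ h, ∑ y ∈ univ.filter (fun y => app h y = app h x), g x y
      = ∑ y, ((univ.filter fun h => app h y = app h x).card : ℂ) * g x y := by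
    intro x
    simp only [Finset.sum_filter]
    rw [Finset.sum_comm]
    simp only [← Finset.sum_filter, Finset.sum_const, nsmul_eq_mul]
  have hsplit : ∀ x y, (if y = x then 1 else (c : ℂ)) * g x y
      = (if y = x then (1 - c) * g x x else 0) + c * g x y := by
    intro x y
    split_ifs with hxy
    · subst hxy; ring
    · ring
  rw [Finset.sum_comm, Finset.mul_sum]
  simp only [hcount, Finset.mul_sum, ← mul_assoc, inv_card_mul_card_collisions app c huniv,
    hsplit, Finset.sum_add_distrib, Finset.sum_ite_eq', Finset.mem_univ, if_true]

end Universal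

theorem stmt15_general (n l dD : ℕ)
    (f : (Fin n → Bool) → Matrix (Fin dD) (Fin dD) ℂ)
    (Hfam : Type) [Fintype Hfam] [Nonempty Hfam]
    (app : Hfam → (Fin n → Bool) → (Fin l → Bool))
    (huniv : ∀ x y : Fin n → Bool, x ≠ y →
      ((Finset.univ.filter fun h => app h x = app h y).card : ℝ) / (Fintype.card Hfam)
        = ((2 : ℝ) ^ l)⁻¹)
    (τ : Matrix (Fin dD) (Fin dD) ℂ) :
    (Fintype.card Hfam : ℂ)⁻¹ *
      ∑ h : Hfam,
        ((((1 : Matrix (Fin l → Bool) (Fin l → Bool) ℂ) ⊗ₖ τ⁻¹) *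
          (cqState (fun k => ∑ x ∈ Finset.univ.filter (fun x => app h x = k), f x) *
           cqState (fun k => ∑ x ∈ Finset.univ.filter (fun x => app h x = k), f x))).trace)
    = (1 - ((2 : ℂ) ^ l)⁻¹) *
        ((((1 : Matrix (Fin n → Bool) (Fin n → Bool) ℂ) ⊗ₖ τ⁻¹) *
          (cqState f * cqState f)).trace)
      + ((2 : ℂ) ^ l)⁻¹ * ((τ⁻¹ * ((∑ x, f x) * (∑ x, f x))).trace) := by
  simp only [cqState_mul, trace_one_kronecker_mul_cqState, sum_fiberwise_mul_self]
  simp only [Finset.sum_mul_sum, Matrix.mul_sum, Matrix.trace_sum]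
  rw [average_sum_collisions app _ huniv]
  push_cast
  rfl

/-- Classical universal-hash second-moment identity. With `σ_{XD}` classical
on `X` (blocks `f x`), a perfectly universal₂ family `ℋ : {0,1}^n → {0,1}^ℓ`
(`Pr_H[H(x)=H(y)] = 2^{−ℓ}` exactly for `x ≠ y`), and any positive operator `τ_D`:
`(1/|ℋ|)∑_h tr{(id_K ⊗ τ_D⁻¹) ω²_{KD|S^H=h}}
  = (1 − 2^{−ℓ})·tr{(id_X ⊗ τ_D⁻¹) σ²_{XD}} + 2^{−ℓ}·tr{τ_D⁻¹ σ_D²}`. -/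
theorem stmt15 (n l dD : ℕ)
    (f : (Fin n → Bool) → Matrix (Fin dD) (Fin dD) ℂ)
    (hf : ∀ x, (f x).PosSemidef)
    (Hfam : Type) [Fintype Hfam] [Nonempty Hfam]
    (app : Hfam → (Fin n → Bool) → (Fin l → Bool))
    (huniv : ∀ x y : Fin n → Bool, x ≠ y →
      ((Finset.univ.filter fun h => app h x = app h y).card : ℝ) / (Fintype.card Hfam)
        = ((2 : ℝ) ^ l)⁻¹)
    (τ : Matrix (Fin dD) (Fin dD) ℂ) (hτ : τ.PosSemidef) :
    (Fintype.card Hfam : ℂ)⁻¹ *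
      ∑ h : Hfam,
        ((((1 : Matrix (Fin l → Bool) (Fin l → Bool) ℂ) ⊗ₖ τ⁻¹) *
          (cqState (fun k => ∑ x ∈ Finset.univ.filter (fun x => app h x = k), f x) *
           cqState (fun k => ∑ x ∈ Finset.univ.filter (fun x => app h x = k), f x))).trace)
    = (1 - ((2 : ℂ) ^ l)⁻¹) *
        ((((1 : Matrix (Fin n → Bool) (Fin n → Bool) ℂ) ⊗ₖ τ⁻¹) *
          (cqState f * cqState f)).trace)
      + ((2 : ℂ) ^ l)⁻¹ * ((τ⁻¹ * ((∑ x, f x) * (∑ x, f x))).trace) :=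
  stmt15_general n l dD f Hfam app huniv τ
end
end
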